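/- The matrix B(p) defined above is positive definite (as a self-adjoint operator on ℂ⁴) for every p on the forward light cone with r = |𝐩| > 0. -/

import Mathlib

open scoped ComplexOrder

noncomputable section

/-- `r = |𝐩|` for `p = (p⁰, p¹, p², p³)`. -/
def rr (p : Fin 4 → ℝ) : ℝ := Real.sqrt ((p 1) ^ 2 + (p 2) ^ 2 + (p 3) ^ 2)

/-- The off-diagonal coefficient `(r⁻² - r²)/(2r)`. -/
def bcoef (p : Fin 4 → ℝ) : ℝ := ((rr p)⁻¹ ^ 2 - (rr p) ^ 2) / (2 * rr p)

/-- The spatial coefficient `(r⁻² + r² - 2)/(2r²)`. -/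
def ccoef (p : Fin 4 → ℝ) : ℝ := ((rr p)⁻¹ ^ 2 + (rr p) ^ 2 - 2) / (2 * (rr p) ^ 2)

/-- The real symmetric matrix `B(p)`. -/
def Bmat (p : Fin 4 → ℝ) : Matrix (Fin 4) (Fin 4) ℝ :=
  !![((rr p)⁻¹ ^ 2 + (rr p) ^ 2) / 2, bcoef p * p 1, bcoef p * p 2, bcoef p * p 3;
     bcoef p * p 1, ccoef p * p 1 * p 1 + 1, ccoef p * p 1 * p 2, ccoef p * p 1 * p 3;
     bcoef p * p 2, ccoef p * p 2 * p 1, ccoef p * p 2 * p 2 + 1, ccoef p * p 2 * p 3;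
     bcoef p * p 3, ccoef p * p 3 * p 1, ccoef p * p 3 * p 2, ccoef p * p 3 * p 3 + 1]

/-!
`B(p)` is the symmetric Lorentz boost along `𝐩/r` that multiplies the null vector `(1, 𝐩/r)`
by `r⁻²`, the null vector `(1, -𝐩/r)` by `r²`, and fixes the vectors orthogonal to both.
Boosts along a fixed direction form a one-parameter group, so `B(p) = S²` where `S` is the
boost by `r⁻¹`. As `S` is real, symmetric and invertible, `B(p) = Sᴴ S` is positive definite.
-/

namespace Matrix

section Boost

variable {m : Type*} [DecidableEq m] {u v : m → ℝ}

/-- For `u ⬝ᵥ u = v ⬝ᵥ v = 2` and `u ⬝ᵥ v = 0` this scales `u` by `t`, `v` by `t⁻¹`, and fixes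
`{u, v}ᗮ`; with `u = (1, n)`, `v = (1, -n)` it is the Lorentz boost along the unit vector `n`
with Doppler factor `t`. -/
def boost (u v : m → ℝ) (t : ℝ) : Matrix m m ℝ :=
  1 + ((t - 1) / 2) • vecMulVec u u + ((t⁻¹ - 1) / 2) • vecMulVec v v

theorem boost_isSymm (t : ℝ) : (boost u v t).IsSymm := by
  simp [IsSymm, boost, transpose_vecMulVec]

theorem boost_one : boost u v 1 = 1 := by
  simp [boost]

variable [Fintype m]

theorem boost_mul_boost (hu : u ⬝ᵥ u = 2) (hv : v ⬝ᵥ v = 2) (huv : u ⬝ᵥ v = 0) (s t : ℝ) :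
    boost u v s * boost u v t = boost u v (s * t) := by
  have hvu : v ⬝ᵥ u = 0 := by rwa [dotProduct_comm]
  simp only [boost, add_mul, mul_add, one_mul, mul_one, smul_mul_smul_comm,
    vecMulVec_mul_vecMulVec, hu, hv, huv, hvu, zero_smul, vecMulVec_smul, vecMulVec_zero, mul_inv]
  module

theorem isUnit_boost (hu : u ⬝ᵥ u = 2) (hv : v ⬝ᵥ v = 2) (huv : u ⬝ᵥ v = 0) {t : ℝ}
    (ht : t ≠ 0) : IsUnit (boost u v t) :=
  .of_mul_eq_one (boost u v t⁻¹) <| by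
    rw [boost_mul_boost hu hv huv, mul_inv_cancel₀ ht, boost_one]

end Boost

theorem posDef_map_ofReal_mul_self {m : Type*} [Fintype m] [DecidableEq m] {S : Matrix m m ℝ}
    (hS : S.IsSymm) (hS_unit : IsUnit S) : ((S * S).map ((↑) : ℝ → ℂ)).PosDef := by
  have hSc : (S.map ((↑) : ℝ → ℂ))ᴴ = S.map (↑) := by
    rw [← conjTranspose_map _ fun x => (Complex.conj_ofReal x).symm,
      conjTranspose_eq_transpose_of_trivial, hS.eq]
  have hmul : (S * S).map ((↑) : ℝ → ℂ) = (S.map (↑))ᴴ * S.map (↑) := by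
    rw [hSc]; exact Matrix.map_mul (f := Complex.ofRealHom)
  rw [hmul]
  exact .conjTranspose_mul_self _ <|
    mulVec_injective_iff_isUnit.mpr <| hS_unit.map Complex.ofRealHom.mapMatrix

end Matrix

open Matrix

def nullDir (p : Fin 4 → ℝ) (ε : ℝ) : Fin 4 → ℝ :=
  ![1, ε * p 1 / rr p, ε * p 2 / rr p, ε * p 3 / rr p]

theorem nullDir_dotProduct {p : Fin 4 → ℝ} (hr : rr p ≠ 0) (ε δ : ℝ) :
    nullDir p ε ⬝ᵥ nullDir p δ = 1 + ε * δ := by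
  have hsq : rr p ^ 2 = p 1 ^ 2 + p 2 ^ 2 + p 3 ^ 2 := Real.sq_sqrt (by positivity)
  simp only [nullDir, dotProduct, Fin.sum_univ_four, Matrix.cons_val]
  field_simp
  linear_combination (-ε * δ) * hsq

theorem Bmat_eq_boost {p : Fin 4 → ℝ} (hr : rr p ≠ 0) :
    Bmat p = boost (nullDir p 1) (nullDir p (-1)) ((rr p)⁻¹ ^ 2) := by
  ext i j
  fin_cases i <;> fin_cases j <;>
    simp [Bmat, bcoef, ccoef, boost, nullDir, one_apply] <;>
    field_simp <;> ring

theorem B_posDef_general (p : Fin 4 → ℝ) (hr : 0 < rr p) :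
    ((Bmat p).map (fun x => (x : ℂ))).PosDef := by
  have hu : nullDir p 1 ⬝ᵥ nullDir p 1 = 2 := by rw [nullDir_dotProduct hr.ne']; norm_num
  have hv : nullDir p (-1) ⬝ᵥ nullDir p (-1) = 2 := by rw [nullDir_dotProduct hr.ne']; norm_num
  have huv : nullDir p 1 ⬝ᵥ nullDir p (-1) = 0 := by rw [nullDir_dotProduct hr.ne']; norm_num
  rw [Bmat_eq_boost hr.ne', sq, ← boost_mul_boost hu hv huv]
  exact posDef_map_ofReal_mul_self (boost_isSymm _) (isUnit_boost hu hv huv (inv_pos.mpr hr).ne')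

/-- `B(p)` is positive definite as a self-adjoint operator on `ℂ⁴`, for every `p`
on the forward light cone with `r = |𝐩| > 0`. -/
theorem B_posDef (p : Fin 4 → ℝ) (hcone : p 0 = rr p) (hr : 0 < rr p) :
    ((Bmat p).map (fun x => (x : ℂ))).PosDef :=
  B_posDef_general p hr

end
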